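/- arXiv:2505.16953 — 3 statements merged into one kernel-verified Lean document; each statement's English description precedes it below -/
import Mathlib

section
/- Corrected mutual information (Lemma 2): the mutual information between Y and the pair (X₁, X₂) under the true distribution p can be written as an inverse-probability-weighted expectation under the observed-data distribution: I_p(Y:(X₁,X₂)) = ∑_{x₁,x₂,y} p_obs(x₁,x₂,y) · (P₀ / π(x₁,x₂,y)) · log( p(x₁,x₂,y) / (p_{X₁X₂}(x₁,x₂) · p_Y(y)) ), where the weight P₀ / π(x₁,x₂,y) equals (1 − P(missing)) / (1 − P(missing | x₁,x₂,y)) and terms with p(x₁,x₂,y) = 0 contribute 0. -/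
open scoped BigOperators

noncomputable section

variable {X₁ X₂ Y : Type*} [Fintype X₁] [Fintype X₂] [Fintype Y]

/-- `p` is a probability mass function on a finite type. -/
def IsPMF {Ω : Type*} [Fintype Ω] (p : Ω → ℝ) : Prop :=
  (∀ ω, 0 ≤ p ω) ∧ ∑ ω, p ω = 1

/-- Marginal of `q` on `Y`. -/
def margY (q : X₁ × X₂ × Y → ℝ) : Y → ℝ :=
  fun y => ∑ x₁, ∑ x₂, q (x₁, x₂, y)

/-- Marginal of `q` on `X₁`. -/
def margX1 (q : X₁ × X₂ × Y → ℝ) : X₁ → ℝ :=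
  fun x₁ => ∑ x₂, ∑ y, q (x₁, x₂, y)

/-- Marginal of `q` on `X₂`. -/
def margX2 (q : X₁ × X₂ × Y → ℝ) : X₂ → ℝ :=
  fun x₂ => ∑ x₁, ∑ y, q (x₁, x₂, y)

/-- Marginal of `q` on `(X₁, X₂)`. -/
def margX1X2 (q : X₁ × X₂ × Y → ℝ) : X₁ × X₂ → ℝ :=
  fun s => ∑ y, q (s.1, s.2, y)

/-- Marginal of `q` on `(X₁, Y)`. -/
def margX1Y (q : X₁ × X₂ × Y → ℝ) : X₁ × Y → ℝ :=
  fun s => ∑ x₂, q (s.1, x₂, s.2)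

/-- Marginal of `q` on `(X₂, Y)`. -/
def margX2Y (q : X₁ × X₂ × Y → ℝ) : X₂ × Y → ℝ :=
  fun s => ∑ x₁, q (x₁, s.1, s.2)

/-- Mutual information `I_q(Y : X₁)`.  (Terms with zero numerator probability
contribute `0`, since `0 * log _ = 0` and `Real.log 0 = 0`.) -/
def miX1 (q : X₁ × X₂ × Y → ℝ) : ℝ :=
  ∑ x₁, ∑ y,
    margX1Y q (x₁, y) * Real.log (margX1Y q (x₁, y) / (margX1 q x₁ * margY q y))

/-- Mutual information `I_q(Y : X₂)`. -/
def miX2 (q : X₁ × X₂ × Y → ℝ) : ℝ :=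
  ∑ x₂, ∑ y,
    margX2Y q (x₂, y) * Real.log (margX2Y q (x₂, y) / (margX2 q x₂ * margY q y))

/-- Joint mutual information `I_q(Y : (X₁, X₂))`. -/
def miJoint (q : X₁ × X₂ × Y → ℝ) : ℝ :=
  ∑ x₁, ∑ x₂, ∑ y,
    q (x₁, x₂, y) * Real.log (q (x₁, x₂, y) / (margX1X2 q (x₁, x₂) * margY q y))

/-- Conditional mutual information `I_q(Y : X₂ | X₁)`. -/
def cmiX2X1 (q : X₁ × X₂ × Y → ℝ) : ℝ :=
  ∑ x₁, ∑ x₂, ∑ y,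
    q (x₁, x₂, y) *
      Real.log (margX1 q x₁ * q (x₁, x₂, y) /
        (margX1X2 q (x₁, x₂) * margX1Y q (x₁, y)))

/-- Conditional mutual information `I_q(Y : X₁ | X₂)`. -/
def cmiX1X2 (q : X₁ × X₂ × Y → ℝ) : ℝ :=
  ∑ x₁, ∑ x₂, ∑ y,
    q (x₁, x₂, y) *
      Real.log (margX2 q x₂ * q (x₁, x₂, y) /
        (margX1X2 q (x₁, x₂) * margX2Y q (x₂, y)))

/-- Co-information `CoI_q(Y; X₁; X₂) = I_q(Y:X₁) + I_q(Y:X₂) − I_q(Y:(X₁,X₂))`. -/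
def coI (q : X₁ × X₂ × Y → ℝ) : ℝ := miX1 q + miX2 q - miJoint q

/-- Shannon entropy of a pmf on a finite type (with `0 · log 0 = 0`). -/
def entropy {Ω : Type*} [Fintype Ω] (r : Ω → ℝ) : ℝ :=
  -∑ s, r s * Real.log (r s)

/-- `Δ_p`: the set of pmfs whose pairwise marginals with `Y` match those of `p`. -/
def Delta (p : X₁ × X₂ × Y → ℝ) : Set (X₁ × X₂ × Y → ℝ) :=
  {q | IsPMF q ∧ margX1Y q = margX1Y p ∧ margX2Y q = margX2Y p}

/-- **Corrected mutual information (Lemma 2).**  The mutual information between `Y` and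
`(X₁, X₂)` under the true distribution `p` equals an inverse-probability-weighted
expectation under the observed-data distribution `pobs`. -/
theorem corrected_mutual_information
    [Nonempty X₁] [Nonempty X₂] [Nonempty Y]
    (p obsProb pobs : X₁ × X₂ × Y → ℝ) (P₀ : ℝ)
    (hp : IsPMF p)
    (hobs_pos : ∀ ω, 0 < obsProb ω) (hobs_le : ∀ ω, obsProb ω ≤ 1)
    (hP₀ : P₀ = ∑ ω, p ω * obsProb ω)
    (hpobs : ∀ ω, pobs ω = p ω * obsProb ω / P₀) :
    miJoint p =
      ∑ x₁, ∑ x₂, ∑ y,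
        pobs (x₁, x₂, y) * (P₀ / obsProb (x₁, x₂, y)) *
          Real.log (p (x₁, x₂, y) / (margX1X2 p (x₁, x₂) * margY p y)) := by
  have hP₀pos : 0 < P₀ := by
    rw [hP₀]
    obtain ⟨ω, hω⟩ : ∃ ω, 0 < p ω := by
      by_contra h
      push_neg at h
      have : ∑ ω, p ω = 0 := Finset.sum_eq_zero fun ω _ => le_antisymm (h ω) (hp.1 ω)
      rw [hp.2] at this; norm_num at this
    exact Finset.sum_pos' (fun ω _ => mul_nonneg (hp.1 ω) (hobs_pos ω).le)
      ⟨ω, Finset.mem_univ ω, mul_pos hω (hobs_pos ω)⟩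
  have key : ∀ ω : X₁ × X₂ × Y, pobs ω * (P₀ / obsProb ω) = p ω := by
    intro ω
    rw [hpobs ω]
    field_simp [hP₀pos.ne', (hobs_pos ω).ne']
  unfold miJoint
  refine Finset.sum_congr rfl fun x₁ _ => Finset.sum_congr rfl fun x₂ _ =>
    Finset.sum_congr rfl fun y _ => ?_
  rw [key (x₁, x₂, y)]
end
end

section
/- A single optimizer solves all four PID objectives: if q* ∈ Δ_p satisfies I_{q*}(Y:(X₁,X₂)) ≤ I_q(Y:(X₁,X₂)) for all q ∈ Δ_p, then q* also satisfies I_{q*}(Y:X₁|X₂) ≤ I_q(Y:X₁|X₂), I_{q*}(Y:X₂|X₁) ≤ I_q(Y:X₂|X₁), and CoI_{q*}(Y;X₁;X₂) ≥ CoI_q(Y;X₁;X₂) for all q ∈ Δ_p; that is, a minimizer of the joint mutual information over Δ_p simultaneously minimizes both conditional mutual informations and maximizes the co-information over Δ_p. -/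
open scoped BigOperators

noncomputable section

variable {X₁ X₂ Y : Type*} [Fintype X₁] [Fintype X₂] [Fintype Y]

lemma margX1_eq_sum (q : X₁ × X₂ × Y → ℝ) (x₁ : X₁) :
    margX1 q x₁ = ∑ y, margX1Y q (x₁, y) := by
  unfold margX1 margX1Y; exact Finset.sum_comm

lemma margY_eq_sum1 (q : X₁ × X₂ × Y → ℝ) (y : Y) :
    margY q y = ∑ x₁, margX1Y q (x₁, y) := rfl

lemma margX2_eq_sum (q : X₁ × X₂ × Y → ℝ) (x₂ : X₂) :
    margX2 q x₂ = ∑ y, margX2Y q (x₂, y) := by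
  unfold margX2 margX2Y; exact Finset.sum_comm

lemma margY_eq_sum2 (q : X₁ × X₂ × Y → ℝ) (y : Y) :
    margY q y = ∑ x₂, margX2Y q (x₂, y) := by
  unfold margY margX2Y; exact Finset.sum_comm

lemma miX1_congr (q q' : X₁ × X₂ × Y → ℝ) (h : margX1Y q = margX1Y q') :
    miX1 q = miX1 q' := by
  have h1 : margX1 q = margX1 q' := funext fun x₁ => by
    rw [margX1_eq_sum, margX1_eq_sum, h]
  have h2 : margY q = margY q' := funext fun y => by
    rw [margY_eq_sum1, margY_eq_sum1, h]
  unfold miX1; rw [h, h1, h2]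

lemma miX2_congr (q q' : X₁ × X₂ × Y → ℝ) (h : margX2Y q = margX2Y q') :
    miX2 q = miX2 q' := by
  have h1 : margX2 q = margX2 q' := funext fun x₂ => by
    rw [margX2_eq_sum, margX2_eq_sum, h]
  have h2 : margY q = margY q' := funext fun y => by
    rw [margY_eq_sum2, margY_eq_sum2, h]
  unfold miX2; rw [h, h1, h2]

lemma chain1 (q : X₁ × X₂ × Y → ℝ) (hq : ∀ ω, 0 ≤ q ω) :
    miJoint q = miX1 q + cmiX2X1 q := by
  have key : miX1 q = ∑ x₁, ∑ x₂, ∑ y,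
      q (x₁, x₂, y) * Real.log (margX1Y q (x₁, y) / (margX1 q x₁ * margY q y)) := by
    unfold miX1
    refine Finset.sum_congr rfl fun x₁ _ => ?_
    rw [Finset.sum_comm]
    refine Finset.sum_congr rfl fun y _ => ?_
    rw [← Finset.sum_mul]; rfl
  rw [key]
  unfold miJoint cmiX2X1
  rw [← Finset.sum_add_distrib]
  refine Finset.sum_congr rfl fun x₁ _ => ?_
  rw [← Finset.sum_add_distrib]
  refine Finset.sum_congr rfl fun x₂ _ => ?_
  rw [← Finset.sum_add_distrib]
  refine Finset.sum_congr rfl fun y _ => ?_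
  rcases eq_or_lt_of_le (hq (x₁, x₂, y)) with h0 | hpos
  · simp [← h0]
  · have hm1Y : 0 < margX1Y q (x₁, y) :=
      lt_of_lt_of_le hpos (Finset.single_le_sum (fun i _ => hq (x₁, i, y))
        (Finset.mem_univ x₂))
    have hm12 : 0 < margX1X2 q (x₁, x₂) :=
      lt_of_lt_of_le hpos (Finset.single_le_sum (fun i _ => hq (x₁, x₂, i))
        (Finset.mem_univ y))
    have hm1 : 0 < margX1 q x₁ := by
      rw [margX1_eq_sum]
      exact lt_of_lt_of_le hm1Y (Finset.single_le_sum
        (fun i _ => Finset.sum_nonneg fun j _ => hq (x₁, j, i)) (Finset.mem_univ y))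
    have hmY : 0 < margY q y := by
      rw [margY_eq_sum1]
      exact lt_of_lt_of_le hm1Y (Finset.single_le_sum
        (fun i _ => Finset.sum_nonneg fun j _ => hq (i, j, y)) (Finset.mem_univ x₁))
    rw [Real.log_div hpos.ne' (mul_ne_zero hm12.ne' hmY.ne'),
      Real.log_mul hm12.ne' hmY.ne',
      Real.log_div hm1Y.ne' (mul_ne_zero hm1.ne' hmY.ne'),
      Real.log_mul hm1.ne' hmY.ne',
      Real.log_div (mul_ne_zero hm1.ne' hpos.ne') (mul_ne_zero hm12.ne' hm1Y.ne'),
      Real.log_mul hm1.ne' hpos.ne',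
      Real.log_mul hm12.ne' hm1Y.ne']
    ring

lemma chain2 (q : X₁ × X₂ × Y → ℝ) (hq : ∀ ω, 0 ≤ q ω) :
    miJoint q = miX2 q + cmiX1X2 q := by
  have key : miX2 q = ∑ x₁, ∑ x₂, ∑ y,
      q (x₁, x₂, y) * Real.log (margX2Y q (x₂, y) / (margX2 q x₂ * margY q y)) := by
    unfold miX2
    calc (∑ x₂, ∑ y, margX2Y q (x₂, y) *
            Real.log (margX2Y q (x₂, y) / (margX2 q x₂ * margY q y)))
        = ∑ x₂, ∑ y, ∑ x₁, q (x₁, x₂, y) *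
            Real.log (margX2Y q (x₂, y) / (margX2 q x₂ * margY q y)) := by
          refine Finset.sum_congr rfl fun x₂ _ => Finset.sum_congr rfl fun y _ => ?_
          rw [← Finset.sum_mul]; rfl
      _ = ∑ x₂, ∑ x₁, ∑ y, q (x₁, x₂, y) *
            Real.log (margX2Y q (x₂, y) / (margX2 q x₂ * margY q y)) :=
          Finset.sum_congr rfl fun x₂ _ => Finset.sum_comm
      _ = ∑ x₁, ∑ x₂, ∑ y, q (x₁, x₂, y) *
            Real.log (margX2Y q (x₂, y) / (margX2 q x₂ * margY q y)) :=
          Finset.sum_comm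
  rw [key]
  unfold miJoint cmiX1X2
  rw [← Finset.sum_add_distrib]
  refine Finset.sum_congr rfl fun x₁ _ => ?_
  rw [← Finset.sum_add_distrib]
  refine Finset.sum_congr rfl fun x₂ _ => ?_
  rw [← Finset.sum_add_distrib]
  refine Finset.sum_congr rfl fun y _ => ?_
  rcases eq_or_lt_of_le (hq (x₁, x₂, y)) with h0 | hpos
  · simp [← h0]
  · have hm2Y : 0 < margX2Y q (x₂, y) :=
      lt_of_lt_of_le hpos (Finset.single_le_sum (fun i _ => hq (i, x₂, y))
        (Finset.mem_univ x₁))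
    have hm12 : 0 < margX1X2 q (x₁, x₂) :=
      lt_of_lt_of_le hpos (Finset.single_le_sum (fun i _ => hq (x₁, x₂, i))
        (Finset.mem_univ y))
    have hm2 : 0 < margX2 q x₂ := by
      rw [margX2_eq_sum]
      exact lt_of_lt_of_le hm2Y (Finset.single_le_sum
        (fun i _ => Finset.sum_nonneg fun j _ => hq (j, x₂, i)) (Finset.mem_univ y))
    have hmY : 0 < margY q y := by
      rw [margY_eq_sum2]
      exact lt_of_lt_of_le hm2Y (Finset.single_le_sum
        (fun i _ => Finset.sum_nonneg fun j _ => hq (j, i, y)) (Finset.mem_univ x₂))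
    rw [Real.log_div hpos.ne' (mul_ne_zero hm12.ne' hmY.ne'),
      Real.log_mul hm12.ne' hmY.ne',
      Real.log_div hm2Y.ne' (mul_ne_zero hm2.ne' hmY.ne'),
      Real.log_mul hm2.ne' hmY.ne',
      Real.log_div (mul_ne_zero hm2.ne' hpos.ne') (mul_ne_zero hm12.ne' hm2Y.ne'),
      Real.log_mul hm2.ne' hpos.ne',
      Real.log_mul hm12.ne' hm2Y.ne']
    ring

/-- **A single optimizer solves all four PID objectives:** a minimizer of the joint
mutual information over `Δ_p` simultaneously minimizes both conditional mutual
informations and maximizes the co-information over `Δ_p`. -/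
theorem one_optimizer_solves_all
    [Nonempty X₁] [Nonempty X₂] [Nonempty Y]
    (p qstar : X₁ × X₂ × Y → ℝ) (hp : IsPMF p)
    (hqstar : qstar ∈ Delta p)
    (hmin : ∀ q ∈ Delta p, miJoint qstar ≤ miJoint q) :
    (∀ q ∈ Delta p, cmiX1X2 qstar ≤ cmiX1X2 q) ∧
    (∀ q ∈ Delta p, cmiX2X1 qstar ≤ cmiX2X1 q) ∧
    (∀ q ∈ Delta p, coI q ≤ coI qstar) := by
  obtain ⟨hs_pmf, hs1, hs2⟩ := hqstar
  have hsnn := hs_pmf.1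
  have key : ∀ q ∈ Delta p, miX1 q = miX1 qstar ∧ miX2 q = miX2 qstar := by
    intro q ⟨hq_pmf, h1, h2⟩
    exact ⟨miX1_congr q qstar (h1.trans hs1.symm),
      miX2_congr q qstar (h2.trans hs2.symm)⟩
  refine ⟨?_, ?_, ?_⟩ <;> intro q hq <;>
    obtain ⟨e1, e2⟩ := key q hq <;>
    have hqnn := hq.1.1 <;>
    have hle := hmin q hq
  · have c1 := chain2 q hqnn
    have c2 := chain2 qstar hsnn
    linarith
  · have c1 := chain1 q hqnn
    have c2 := chain1 qstar hsnn
    linarith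
  · unfold coI; linarith
end
end

section
/- PID of XOR is purely complementary: let p be the probability mass function on Bool × Bool × Bool (coordinates x₁, x₂, y) with p(x₁,x₂,y) = 1/4 if y = x₁ XOR x₂ and p(x₁,x₂,y) = 0 otherwise (i.e., X₁ and X₂ are independent fair coin flips and Y is their exclusive-or). Then ŨI(Y:X₁\X₂) = 0, ŨI(Y:X₂\X₁) = 0, S̃I(Y:X₁;X₂) = 0, and C̃I(Y:X₁;X₂) = log 2; in particular I_p(Y:(X₁,X₂)) = log 2 while I_p(Y:X₁) = I_p(Y:X₂) = 0. -/
open scoped BigOperators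

noncomputable section

variable {X₁ X₂ Y : Type*} [Fintype X₁] [Fintype X₂] [Fintype Y]

/-- The XOR distribution on `Bool × Bool × Bool`: `X₁` and `X₂` are independent fair
coin flips and `Y = X₁ XOR X₂`. -/
def pXOR : Bool × Bool × Bool → ℝ :=
  fun w => if w.2.2 = Bool.xor w.1 w.2.1 then 1 / 4 else 0

lemma qlog_ge (q s : ℝ) (hq : 0 ≤ q) (hs : 0 ≤ s) (h : 0 < q → 0 < s) :
    q - s ≤ q * Real.log (q / s) := by
  rcases hq.lt_or_eq with h0 | h0
  · have hs' := h h0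
    have hlog := Real.log_le_sub_one_of_pos (div_pos hs' h0)
    have heq : Real.log (q / s) = - Real.log (s / q) := by
      rw [← Real.log_inv]; congr 1; rw [inv_div]
    rw [heq]
    have h2 := mul_le_mul_of_nonneg_left hlog h0.le
    have h3 : q * (s / q - 1) = s - q := by field_simp
    linarith
  · rw [← h0]; simp [hs]

section nonneg
variable (q : X₁ × X₂ × Y → ℝ)

lemma sum_q_eq (hsum : ∑ ω, q ω = 1) : ∑ x₁, ∑ x₂, ∑ y, q (x₁, x₂, y) = 1 := by
  simpa [Fintype.sum_prod_type] using hsum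

lemma sum_margY (hsum : ∑ ω, q ω = 1) : ∑ y, margY q y = 1 := by
  unfold margY
  rw [Finset.sum_comm]
  rw [show (∑ x₁, ∑ y : Y, ∑ x₂, q (x₁, x₂, y)) = ∑ x₁, ∑ x₂, ∑ y, q (x₁, x₂, y) from
    Finset.sum_congr rfl fun x₁ _ => Finset.sum_comm]
  exact sum_q_eq q hsum

lemma sum_margX1Y (x₁ : X₁) : ∑ y, margX1Y q (x₁, y) = margX1 q x₁ :=
  Finset.sum_comm

lemma sum_margX2Y (x₂ : X₂) : ∑ y, margX2Y q (x₂, y) = margX2 q x₂ := by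
  unfold margX2Y margX2
  exact Finset.sum_comm

lemma sum_margX1X2' (x₂ : X₂) : ∑ x₁, margX1X2 q (x₁, x₂) = margX2 q x₂ := rfl

lemma miJoint_nonneg (hq : IsPMF q) : 0 ≤ miJoint q := by
  obtain ⟨hpos, hsum⟩ := hq
  have hb : ∀ s, 0 ≤ margX1X2 q s := fun s => Finset.sum_nonneg fun y _ => hpos _
  have hc : ∀ y, 0 ≤ margY q y :=
    fun y => Finset.sum_nonneg fun _ _ => Finset.sum_nonneg fun _ _ => hpos _
  have hble : ∀ x₁ x₂ y, q (x₁, x₂, y) ≤ margX1X2 q (x₁, x₂) := fun x₁ x₂ y =>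
    Finset.single_le_sum (f := fun y => q (x₁, x₂, y)) (fun y _ => hpos _) (Finset.mem_univ y)
  have hcle : ∀ x₁ x₂ y, q (x₁, x₂, y) ≤ margY q y := fun x₁ x₂ y =>
    le_trans (Finset.single_le_sum (f := fun i => q (x₁, i, y)) (fun i _ => hpos _) (Finset.mem_univ x₂))
      (Finset.single_le_sum (f := fun i => ∑ x₂, q (i, x₂, y))
        (fun i _ => Finset.sum_nonneg fun j _ => hpos _) (Finset.mem_univ x₁))
  have key : ∀ x₁ x₂ y, q (x₁, x₂, y) - margX1X2 q (x₁, x₂) * margY q y ≤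
      q (x₁, x₂, y) * Real.log (q (x₁, x₂, y) / (margX1X2 q (x₁, x₂) * margY q y)) := by
    intro x₁ x₂ y
    refine qlog_ge _ _ (hpos _) (mul_nonneg (hb _) (hc _)) fun h0 => ?_
    exact mul_pos (lt_of_lt_of_le h0 (hble x₁ x₂ y)) (lt_of_lt_of_le h0 (hcle x₁ x₂ y))
  have hssum : ∑ x₁, ∑ x₂, ∑ y, margX1X2 q (x₁, x₂) * margY q y = 1 := by
    simp_rw [← Finset.mul_sum, sum_margY q hsum, mul_one]
    exact sum_q_eq q hsum
  calc (0:ℝ) = ∑ x₁, ∑ x₂, ∑ y, (q (x₁, x₂, y) - margX1X2 q (x₁, x₂) * margY q y) := by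
        simp only [Finset.sum_sub_distrib, sum_q_eq q hsum, hssum]; ring
    _ ≤ miJoint q := by
        refine Finset.sum_le_sum fun x₁ _ => Finset.sum_le_sum fun x₂ _ =>
          Finset.sum_le_sum fun y _ => key x₁ x₂ y

lemma cmiX2X1_nonneg (hq : IsPMF q) : 0 ≤ cmiX2X1 q := by
  obtain ⟨hpos, hsum⟩ := hq
  have ha : ∀ x₁, 0 ≤ margX1 q x₁ :=
    fun _ => Finset.sum_nonneg fun _ _ => Finset.sum_nonneg fun _ _ => hpos _
  have hb : ∀ s, 0 ≤ margX1X2 q s := fun s => Finset.sum_nonneg fun y _ => hpos _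
  have hc : ∀ s, 0 ≤ margX1Y q s := fun s => Finset.sum_nonneg fun _ _ => hpos _
  have hble : ∀ x₁ x₂ y, q (x₁, x₂, y) ≤ margX1X2 q (x₁, x₂) := fun x₁ x₂ y =>
    Finset.single_le_sum (f := fun y => q (x₁, x₂, y)) (fun y _ => hpos _) (Finset.mem_univ y)
  have hcle : ∀ x₁ x₂ y, q (x₁, x₂, y) ≤ margX1Y q (x₁, y) := fun x₁ x₂ y =>
    Finset.single_le_sum (f := fun i => q (x₁, i, y)) (fun i _ => hpos _) (Finset.mem_univ x₂)
  have hale : ∀ x₁ x₂ y, q (x₁, x₂, y) ≤ margX1 q x₁ := fun x₁ x₂ y =>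
    le_trans (Finset.single_le_sum (f := fun i => q (x₁, x₂, i)) (fun i _ => hpos _) (Finset.mem_univ y))
      (Finset.single_le_sum (f := fun j => ∑ y, q (x₁, j, y))
        (fun j _ => Finset.sum_nonneg fun i _ => hpos _) (Finset.mem_univ x₂))
  have key : ∀ x₁ x₂ y,
      q (x₁, x₂, y) - margX1X2 q (x₁, x₂) * margX1Y q (x₁, y) / margX1 q x₁ ≤
      q (x₁, x₂, y) * Real.log (margX1 q x₁ * q (x₁, x₂, y) /
        (margX1X2 q (x₁, x₂) * margX1Y q (x₁, y))) := by
    intro x₁ x₂ y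
    rcases (hpos (x₁, x₂, y)).lt_or_eq with h0 | h0
    · have hA : 0 < margX1 q x₁ := lt_of_lt_of_le h0 (hale x₁ x₂ y)
      have hB : 0 < margX1X2 q (x₁, x₂) := lt_of_lt_of_le h0 (hble x₁ x₂ y)
      have hC : 0 < margX1Y q (x₁, y) := lt_of_lt_of_le h0 (hcle x₁ x₂ y)
      have harg : margX1 q x₁ * q (x₁, x₂, y) / (margX1X2 q (x₁, x₂) * margX1Y q (x₁, y)) =
          q (x₁, x₂, y) / (margX1X2 q (x₁, x₂) * margX1Y q (x₁, y) / margX1 q x₁) := by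
        field_simp
      rw [harg]
      exact qlog_ge _ _ h0.le (by positivity) fun _ => by positivity
    · rw [← h0]
      simp only [zero_sub, zero_mul, neg_nonpos]
      exact div_nonneg (mul_nonneg (hb _) (hc _)) (ha _)
  have hssum : ∑ x₁, ∑ x₂, ∑ y,
      margX1X2 q (x₁, x₂) * margX1Y q (x₁, y) / margX1 q x₁ = 1 := by
    have inner : ∀ x₁, (∑ x₂, ∑ y,
        margX1X2 q (x₁, x₂) * margX1Y q (x₁, y) / margX1 q x₁) = margX1 q x₁ := by
      intro x₁
      rcases eq_or_ne (margX1 q x₁) 0 with h0 | h0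
      · simp [h0]
      · simp_rw [mul_div_assoc, ← Finset.mul_sum, ← Finset.sum_div, sum_margX1Y,
          div_self h0, mul_one]
        rfl
      -- note: ∑ x₂, margX1X2 q (x₁, x₂) = margX1 q x₁ is rfl
    simp_rw [inner]
    simpa [Fintype.sum_prod_type, margX1] using hsum
  calc (0:ℝ) = ∑ x₁, ∑ x₂, ∑ y,
      (q (x₁, x₂, y) - margX1X2 q (x₁, x₂) * margX1Y q (x₁, y) / margX1 q x₁) := by
        simp only [Finset.sum_sub_distrib, sum_q_eq q hsum, hssum]; ring
    _ ≤ cmiX2X1 q := Finset.sum_le_sum fun x₁ _ => Finset.sum_le_sum fun x₂ _ =>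
        Finset.sum_le_sum fun y _ => key x₁ x₂ y

lemma cmiX1X2_nonneg (hq : IsPMF q) : 0 ≤ cmiX1X2 q := by
  obtain ⟨hpos, hsum⟩ := hq
  have ha : ∀ x₂, 0 ≤ margX2 q x₂ :=
    fun _ => Finset.sum_nonneg fun _ _ => Finset.sum_nonneg fun _ _ => hpos _
  have hb : ∀ s, 0 ≤ margX1X2 q s := fun s => Finset.sum_nonneg fun y _ => hpos _
  have hc : ∀ s, 0 ≤ margX2Y q s := fun s => Finset.sum_nonneg fun _ _ => hpos _
  have hble : ∀ x₁ x₂ y, q (x₁, x₂, y) ≤ margX1X2 q (x₁, x₂) := fun x₁ x₂ y =>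
    Finset.single_le_sum (f := fun y => q (x₁, x₂, y)) (fun y _ => hpos _) (Finset.mem_univ y)
  have hcle : ∀ x₁ x₂ y, q (x₁, x₂, y) ≤ margX2Y q (x₂, y) := fun x₁ x₂ y =>
    Finset.single_le_sum (f := fun i => q (i, x₂, y)) (fun i _ => hpos _) (Finset.mem_univ x₁)
  have hBA : ∀ x₁ x₂, margX1X2 q (x₁, x₂) ≤ margX2 q x₂ := fun x₁ x₂ =>
    Finset.single_le_sum (f := fun i => ∑ y, q (i, x₂, y))
      (fun i _ => Finset.sum_nonneg fun _ _ => hpos _) (Finset.mem_univ x₁)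
  have hale : ∀ x₁ x₂ y, q (x₁, x₂, y) ≤ margX2 q x₂ := fun x₁ x₂ y =>
    le_trans (Finset.single_le_sum (f := fun i => q (x₁, x₂, i)) (fun i _ => hpos _)
      (Finset.mem_univ y)) (hBA x₁ x₂)
  have key : ∀ x₁ x₂ y,
      q (x₁, x₂, y) - margX1X2 q (x₁, x₂) * margX2Y q (x₂, y) / margX2 q x₂ ≤
      q (x₁, x₂, y) * Real.log (margX2 q x₂ * q (x₁, x₂, y) /
        (margX1X2 q (x₁, x₂) * margX2Y q (x₂, y))) := by
    intro x₁ x₂ y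
    rcases (hpos (x₁, x₂, y)).lt_or_eq with h0 | h0
    · have hA : 0 < margX2 q x₂ := lt_of_lt_of_le h0 (hale x₁ x₂ y)
      have hB : 0 < margX1X2 q (x₁, x₂) := lt_of_lt_of_le h0 (hble x₁ x₂ y)
      have hC : 0 < margX2Y q (x₂, y) := lt_of_lt_of_le h0 (hcle x₁ x₂ y)
      have harg : margX2 q x₂ * q (x₁, x₂, y) / (margX1X2 q (x₁, x₂) * margX2Y q (x₂, y)) =
          q (x₁, x₂, y) / (margX1X2 q (x₁, x₂) * margX2Y q (x₂, y) / margX2 q x₂) := by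
        field_simp
      rw [harg]
      exact qlog_ge _ _ h0.le (by positivity) fun _ => by positivity
    · rw [← h0]
      simp only [zero_sub, zero_mul, neg_nonpos]
      exact div_nonneg (mul_nonneg (hb _) (hc _)) (ha _)
  have hssum : ∑ x₁, ∑ x₂, ∑ y,
      margX1X2 q (x₁, x₂) * margX2Y q (x₂, y) / margX2 q x₂ = 1 := by
    have hstep : ∀ x₁ x₂, (∑ y,
        margX1X2 q (x₁, x₂) * margX2Y q (x₂, y) / margX2 q x₂) = margX1X2 q (x₁, x₂) := by
      intro x₁ x₂
      rcases eq_or_ne (margX2 q x₂) 0 with h0 | h0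
      · have hB0 : margX1X2 q (x₁, x₂) = 0 :=
          le_antisymm (h0 ▸ hBA x₁ x₂) (hb _)
        simp [h0, hB0]
      · simp_rw [mul_div_assoc, ← Finset.mul_sum, ← Finset.sum_div, sum_margX2Y,
          div_self h0, mul_one]
    simp_rw [hstep]
    simpa [margX1X2] using sum_q_eq q hsum
  calc (0:ℝ) = ∑ x₁, ∑ x₂, ∑ y,
      (q (x₁, x₂, y) - margX1X2 q (x₁, x₂) * margX2Y q (x₂, y) / margX2 q x₂) := by
        simp only [Finset.sum_sub_distrib, sum_q_eq q hsum, hssum]; ring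
    _ ≤ cmiX1X2 q := Finset.sum_le_sum fun x₁ _ => Finset.sum_le_sum fun x₂ _ =>
        Finset.sum_le_sum fun y _ => key x₁ x₂ y

end nonneg
/-- The uniform distribution on `Bool × Bool × Bool`. -/
def uXOR : Bool × Bool × Bool → ℝ := fun _ => 1 / 8

lemma pXOR_mem : pXOR ∈ Delta pXOR := by
  refine ⟨⟨fun w => ?_, ?_⟩, rfl, rfl⟩
  · unfold pXOR; split <;> norm_num
  · norm_num [Fintype.sum_prod_type, pXOR, Fintype.sum_bool]

lemma uXOR_mem : uXOR ∈ Delta pXOR := by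
  refine ⟨⟨fun w => by norm_num [uXOR], ?_⟩, ?_, ?_⟩
  · norm_num [Fintype.sum_prod_type, uXOR, Fintype.sum_bool]
  · funext s
    rcases s with ⟨x₁, y⟩
    cases x₁ <;> cases y <;> simp [margX1Y, uXOR, pXOR, Fintype.sum_bool] <;> norm_num
  · funext s
    rcases s with ⟨x₂, y⟩
    cases x₂ <;> cases y <;> simp [margX2Y, uXOR, pXOR, Fintype.sum_bool] <;> norm_num

section delta
variable {q : Bool × Bool × Bool → ℝ} (hq : q ∈ Delta pXOR)
include hq

lemma margX1Y_of_mem : ∀ x₁ y, margX1Y q (x₁, y) = 1 / 4 := by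
  intro x₁ y
  rw [hq.2.1]
  cases x₁ <;> cases y <;> simp [margX1Y, pXOR, Fintype.sum_bool] <;> norm_num

lemma margX2Y_of_mem : ∀ x₂ y, margX2Y q (x₂, y) = 1 / 4 := by
  intro x₂ y
  rw [hq.2.2]
  cases x₂ <;> cases y <;> simp [margX2Y, pXOR, Fintype.sum_bool] <;> norm_num

lemma margX1_of_mem : ∀ x₁, margX1 q x₁ = 1 / 2 := by
  intro x₁
  rw [← sum_margX1Y q x₁]
  simp [Fintype.sum_bool, margX1Y_of_mem hq]
  norm_num

lemma margX2_of_mem : ∀ x₂, margX2 q x₂ = 1 / 2 := by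
  intro x₂
  rw [← sum_margX2Y q x₂]
  simp [Fintype.sum_bool, margX2Y_of_mem hq]
  norm_num

lemma margY_of_mem : ∀ y, margY q y = 1 / 2 := by
  intro y
  have h : margY q y = ∑ x₁, margX1Y q (x₁, y) := rfl
  rw [h]
  simp [Fintype.sum_bool, margX1Y_of_mem hq]
  norm_num

lemma miX1_of_mem : miX1 q = 0 := by
  unfold miX1
  simp only [margX1Y_of_mem hq, margX1_of_mem hq, margY_of_mem hq]
  norm_num

lemma miX2_of_mem : miX2 q = 0 := by
  unfold miX2
  simp only [margX2Y_of_mem hq, margX2_of_mem hq, margY_of_mem hq]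
  norm_num

lemma coI_of_mem : coI q = - miJoint q := by
  unfold coI
  rw [miX1_of_mem hq, miX2_of_mem hq]
  ring

end delta

lemma miJoint_pXOR : miJoint pXOR = Real.log 2 := by
  unfold miJoint
  simp only [Fintype.sum_bool]
  norm_num [pXOR, margX1X2, margY, Fintype.sum_bool]
  ring

lemma miJoint_uXOR : miJoint uXOR = 0 := by
  unfold miJoint
  simp only [Fintype.sum_bool]
  norm_num [uXOR, margX1X2, margY, Fintype.sum_bool]

lemma cmiX1X2_uXOR : cmiX1X2 uXOR = 0 := by
  unfold cmiX1X2
  simp only [Fintype.sum_bool]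
  norm_num [uXOR, margX1X2, margX2, margX2Y, Fintype.sum_bool]

lemma cmiX2X1_uXOR : cmiX2X1 uXOR = 0 := by
  unfold cmiX2X1
  simp only [Fintype.sum_bool]
  norm_num [uXOR, margX1X2, margX1, margX1Y, Fintype.sum_bool]
/-- **PID of XOR is purely complementary:** both unique informations and the shared
information vanish, the complementary information equals `log 2`; in particular
`I_p(Y:(X₁,X₂)) = log 2` while `I_p(Y:X₁) = I_p(Y:X₂) = 0`. -/
theorem pid_xor_purely_complementary :
    sInf (cmiX1X2 '' Delta pXOR) = 0 ∧
    sInf (cmiX2X1 '' Delta pXOR) = 0 ∧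
    sSup (coI '' Delta pXOR) = 0 ∧
    miJoint pXOR - sInf (miJoint '' Delta pXOR) = Real.log 2 ∧
    miJoint pXOR = Real.log 2 ∧
    miX1 pXOR = 0 ∧ miX2 pXOR = 0 := by
  have h1 : sInf (cmiX1X2 '' Delta pXOR) = 0 := by
    apply le_antisymm
    · exact csInf_le ⟨0, by rintro r ⟨q, hq, rfl⟩; exact cmiX1X2_nonneg q hq.1⟩
        ⟨uXOR, uXOR_mem, cmiX1X2_uXOR⟩
    · exact le_csInf ⟨_, ⟨uXOR, uXOR_mem, rfl⟩⟩
        (by rintro r ⟨q, hq, rfl⟩; exact cmiX1X2_nonneg q hq.1)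
  have h2 : sInf (cmiX2X1 '' Delta pXOR) = 0 := by
    apply le_antisymm
    · exact csInf_le ⟨0, by rintro r ⟨q, hq, rfl⟩; exact cmiX2X1_nonneg q hq.1⟩
        ⟨uXOR, uXOR_mem, cmiX2X1_uXOR⟩
    · exact le_csInf ⟨_, ⟨uXOR, uXOR_mem, rfl⟩⟩
        (by rintro r ⟨q, hq, rfl⟩; exact cmiX2X1_nonneg q hq.1)
  have hcoI0 : coI uXOR = 0 := by
    rw [coI_of_mem uXOR_mem, miJoint_uXOR, neg_zero]
  have hub : ∀ r ∈ coI '' Delta pXOR, r ≤ 0 := by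
    rintro r ⟨q, hq, rfl⟩
    rw [coI_of_mem hq]
    simpa using miJoint_nonneg q hq.1
  have h3 : sSup (coI '' Delta pXOR) = 0 := by
    apply le_antisymm
    · exact csSup_le ⟨_, ⟨uXOR, uXOR_mem, rfl⟩⟩ hub
    · exact le_csSup ⟨0, hub⟩ ⟨uXOR, uXOR_mem, hcoI0⟩
  have h4' : sInf (miJoint '' Delta pXOR) = 0 := by
    apply le_antisymm
    · exact csInf_le ⟨0, by rintro r ⟨q, hq, rfl⟩; exact miJoint_nonneg q hq.1⟩
        ⟨uXOR, uXOR_mem, miJoint_uXOR⟩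
    · exact le_csInf ⟨_, ⟨uXOR, uXOR_mem, rfl⟩⟩
        (by rintro r ⟨q, hq, rfl⟩; exact miJoint_nonneg q hq.1)
  exact ⟨h1, h2, h3, by rw [h4', miJoint_pXOR, sub_zero], miJoint_pXOR,
    miX1_of_mem pXOR_mem, miX2_of_mem pXOR_mem⟩
end
end
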